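/- arXiv:1201.1831 — 5 statements merged into one kernel-verified Lean document; each statement's English description precedes it below -/
import Mathlib

section
/- Let r : 2^S → ℤ be a greedoid rank function on a finite set S, and let r* be its dual rank function. Then for all B ⊆ S and all p, q ∈ S: (Gr0*) r*(∅) = 0; (Gr1*) r*(B ∪ {p}) ≤ r*(B) + 1; (Gr2*) r*(B) ≤ r*(S); and (Gr3*) if p, q ∈ B, p ≠ q, r*(B − p) = r*(B) − 1 and r*(B − q) = r*(B) − 1, then r*(B − {p, q}) = r*(B) − 2. -/
/-- Brylawski's generalized dual rank function: `r*(A) = |A| + r(S - A) - r(S)`. -/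
def dualRank {α : Type*} [DecidableEq α] (S : Finset α) (r : Finset α → ℤ)
    (A : Finset α) : ℤ :=
  (A.card : ℤ) + r (S \ A) - r S

/-- A greedoid rank function on the finite ground set `S`: normalized,
increasing, subcardinal and locally semimodular. -/
def IsGreedoidRank {α : Type*} [DecidableEq α] (S : Finset α)
    (r : Finset α → ℤ) : Prop :=
  r ∅ = 0 ∧
  (∀ A ⊆ S, ∀ p ∈ S, r A ≤ r (A ∪ {p})) ∧
  (∀ A ⊆ S, r A ≤ A.card) ∧
  (∀ A ⊆ S, ∀ p ∈ S, ∀ q ∈ S,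
    r A = r (A ∪ {p}) → r A = r (A ∪ {q}) → r (A ∪ {p, q}) = r A)

/-- The dual rank function of a greedoid satisfies the dual rank axioms
(Gr0*)–(Gr3*). -/
theorem greedoid_dual_rank_axioms {α : Type*} [DecidableEq α] (S : Finset α)
    (r : Finset α → ℤ) (hr : IsGreedoidRank S r) :
    dualRank S r ∅ = 0 ∧
    (∀ B ⊆ S, ∀ p ∈ S, dualRank S r (B ∪ {p}) ≤ dualRank S r B + 1) ∧
    (∀ B ⊆ S, dualRank S r B ≤ dualRank S r S) ∧
    (∀ B ⊆ S, ∀ p ∈ S, ∀ q ∈ S, p ∈ B → q ∈ B → p ≠ q →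
      dualRank S r (B \ {p}) = dualRank S r B - 1 →
      dualRank S r (B \ {q}) = dualRank S r B - 1 →
      dualRank S r (B \ {p, q}) = dualRank S r B - 2) := by
  obtain ⟨h0, h1, h2, h3⟩ := hr
  refine ⟨?_, ?_, ?_, ?_⟩
  · simp [dualRank]
  · intro B hB p hp
    by_cases hpB : p ∈ B
    · have hBe : B ∪ {p} = B :=
        Finset.union_eq_left.2 (Finset.singleton_subset_iff.2 hpB)
      rw [hBe]; linarith
    · have hcard : ((B ∪ {p}).card : ℤ) = (B.card : ℤ) + 1 := by
        have he : B ∪ {p} = insert p B := by ext x; simp [or_comm]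
        rw [he, Finset.card_insert_of_notMem hpB]; push_cast; ring
      have hset : (S \ (B ∪ {p})) ∪ {p} = S \ B := by
        ext x
        simp only [Finset.mem_union, Finset.mem_sdiff, Finset.mem_singleton]
        constructor
        · rintro (⟨hxS, hx⟩ | rfl)
          · exact ⟨hxS, fun h => hx (Or.inl h)⟩
          · exact ⟨hp, hpB⟩
        · rintro ⟨hxS, hxB⟩
          by_cases hxp : x = p
          · exact Or.inr hxp
          · exact Or.inl ⟨hxS, by tauto⟩
      have hmono := h1 (S \ (B ∪ {p})) Finset.sdiff_subset p hp
      rw [hset] at hmono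
      simp only [dualRank, hcard]
      linarith
  · intro B hB
    have hc := Finset.card_sdiff_add_card_eq_card hB
    have hc' : ((S \ B).card : ℤ) + B.card = S.card := by exact_mod_cast hc
    have := h2 (S \ B) Finset.sdiff_subset
    simp only [dualRank, Finset.sdiff_self, h0]
    linarith
  · intro B hB p hp q hq hpB hqB hpq hP hQ
    have hsp : S \ (B \ {p}) = (S \ B) ∪ {p} := by
      ext x
      simp only [Finset.mem_sdiff, Finset.mem_union, Finset.mem_singleton]
      constructor
      · rintro ⟨hxS, hx⟩
        by_cases hxp : x = p
        · exact Or.inr hxp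
        · exact Or.inl ⟨hxS, fun h => hx ⟨h, hxp⟩⟩
      · rintro (⟨hxS, hxB⟩ | rfl)
        · exact ⟨hxS, fun h => hxB h.1⟩
        · exact ⟨hp, fun h => h.2 rfl⟩
    have hsq : S \ (B \ {q}) = (S \ B) ∪ {q} := by
      ext x
      simp only [Finset.mem_sdiff, Finset.mem_union, Finset.mem_singleton]
      constructor
      · rintro ⟨hxS, hx⟩
        by_cases hxq : x = q
        · exact Or.inr hxq
        · exact Or.inl ⟨hxS, fun h => hx ⟨h, hxq⟩⟩
      · rintro (⟨hxS, hxB⟩ | rfl)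
        · exact ⟨hxS, fun h => hxB h.1⟩
        · exact ⟨hq, fun h => h.2 rfl⟩
    have hspq : S \ (B \ {p, q}) = (S \ B) ∪ {p, q} := by
      ext x
      simp only [Finset.mem_sdiff, Finset.mem_union, Finset.mem_insert,
        Finset.mem_singleton]
      constructor
      · rintro ⟨hxS, hx⟩
        by_cases hxp : x = p
        · exact Or.inr (Or.inl hxp)
        · by_cases hxq : x = q
          · exact Or.inr (Or.inr hxq)
          · exact Or.inl ⟨hxS, fun h => hx ⟨h, by tauto⟩⟩
      · rintro (⟨hxS, hxB⟩ | rfl | rfl)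
        · exact ⟨hxS, fun h => hxB h.1⟩
        · exact ⟨hp, fun h => h.2 (Or.inl rfl)⟩
        · exact ⟨hq, fun h => h.2 (Or.inr rfl)⟩
    have hcp : ((B \ {p}).card : ℤ) = (B.card : ℤ) - 1 := by
      rw [Finset.card_sdiff_of_subset (Finset.singleton_subset_iff.2 hpB)]
      have : 1 ≤ B.card := Finset.card_pos.2 ⟨p, hpB⟩
      push_cast [Finset.card_singleton]; omega
    have hcq : ((B \ {q}).card : ℤ) = (B.card : ℤ) - 1 := by
      rw [Finset.card_sdiff_of_subset (Finset.singleton_subset_iff.2 hqB)]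
      have : 1 ≤ B.card := Finset.card_pos.2 ⟨q, hqB⟩
      push_cast [Finset.card_singleton]; omega
    have hcpq : ((B \ {p, q}).card : ℤ) = (B.card : ℤ) - 2 := by
      have hsub : ({p, q} : Finset α) ⊆ B := by
        intro x hx
        rcases Finset.mem_insert.1 hx with rfl | hx
        · exact hpB
        · rw [Finset.mem_singleton.1 hx]; exact hqB
      rw [Finset.card_sdiff_of_subset hsub]
      have h2c : ({p, q} : Finset α).card = 2 := Finset.card_pair hpq
      have hle : ({p, q} : Finset α).card ≤ B.card := Finset.card_le_card hsub
      rw [h2c] at hle ⊢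
      omega
    simp only [dualRank, hsp, hcp] at hP
    simp only [dualRank, hsq, hcq] at hQ
    have hrp : r (S \ B) = r ((S \ B) ∪ {p}) := by linarith
    have hrq : r (S \ B) = r ((S \ B) ∪ {q}) := by linarith
    have := h3 (S \ B) Finset.sdiff_subset p hp q hq hrp hrq
    simp only [dualRank, hspq, hcpq, this]
    ring
end

section
/- Let S be a finite set and r : 2^S → ℤ a function, with dual rank r*(A) = |A| + r(S − A) − r(S). Then r is a greedoid rank function and r* is also a greedoid rank function if and only if r is a matroid rank function, i.e., r satisfies (R0) r(∅) = 0, (R1) r(A) ≤ r(A ∪ {p}) ≤ r(A) + 1 for all A ⊆ S and p ∈ S, and (R2') if r(A) = r(A ∪ {p}) = r(A ∪ {q}) then r(A ∪ {p, q}) = r(A). -/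
/-- A matroid rank function on the finite ground set `S`: normalized, with
unit rank increase, and locally semimodular. -/
def IsMatroidRank {α : Type*} [DecidableEq α] (S : Finset α)
    (r : Finset α → ℤ) : Prop :=
  r ∅ = 0 ∧
  (∀ A ⊆ S, ∀ p ∈ S, r A ≤ r (A ∪ {p}) ∧ r (A ∪ {p}) ≤ r A + 1) ∧
  (∀ A ⊆ S, ∀ p ∈ S, ∀ q ∈ S,
    r A = r (A ∪ {p}) → r A = r (A ∪ {q}) → r (A ∪ {p, q}) = r A)

section Aux

variable {α : Type*} [DecidableEq α]

lemma unionSingleton' (X : Finset α) (a : α) : X ∪ {a} = insert a X := by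
  ext x; simp [or_comm]

lemma union_pair' (X : Finset α) (a b : α) : X ∪ {a, b} = (X ∪ {a}) ∪ {b} := by
  ext x; simp

lemma union_self_of_mem' {X : Finset α} {a : α} (h : a ∈ X) : X ∪ {a} = X := by
  rw [unionSingleton', Finset.insert_eq_self.mpr h]

lemma card_union_singleton' {X : Finset α} {a : α} (h : a ∉ X) :
    ((X ∪ {a}).card : ℤ) = X.card + 1 := by
  rw [unionSingleton', Finset.card_insert_of_notMem h]
  push_cast; ring

lemma sdiff_singleton_union_self' {X : Finset α} {a : α} (h : a ∈ X) :
    (X \ {a}) ∪ {a} = X := by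
  rw [Finset.sdiff_singleton_eq_erase, unionSingleton', Finset.insert_erase h]

lemma sdiff_union_singleton' (S A : Finset α) (p : α) :
    S \ (A ∪ {p}) = (S \ A) \ {p} := by
  ext x; simp; tauto

lemma sdiff_sdiff_comm' (X : Finset α) (a b : α) :
    (X \ {a}) \ {b} = (X \ {b}) \ {a} := by
  ext x; simp; tauto

lemma rank_mono_aux {S : Finset α} {r : Finset α → ℤ}
    (h1 : ∀ A ⊆ S, ∀ p ∈ S, r A ≤ r (A ∪ {p})) :
    ∀ n (A B : Finset α), A ⊆ B → B ⊆ S → (B \ A).card = n → r A ≤ r B := by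
  intro n
  induction n with
  | zero =>
    intro A B hAB hBS h0
    have hBA : B \ A = ∅ := Finset.card_eq_zero.mp h0
    have : A = B := Finset.Subset.antisymm hAB (fun x hx => by
      by_contra hxA
      exact absurd (Finset.mem_sdiff.mpr ⟨hx, hxA⟩) (by simp [hBA]))
    rw [this]
  | succ n ih =>
    intro A B hAB hBS hcard
    have hne : (B \ A).Nonempty := by
      rw [← Finset.card_pos, hcard]; omega
    obtain ⟨p, hp⟩ := hne
    have hp' := Finset.mem_sdiff.mp hp
    have h1' := h1 A (hAB.trans hBS) p (hBS hp'.1)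
    have hsub : A ∪ {p} ⊆ B := by
      intro x hx
      rcases Finset.mem_union.mp hx with hx | hx
      · exact hAB hx
      · rw [Finset.mem_singleton.mp hx]; exact hp'.1
    have hset : B \ (A ∪ {p}) = (B \ A).erase p := by
      ext x; simp; tauto
    have hc : (B \ (A ∪ {p})).card = n := by
      rw [hset, Finset.card_erase_of_mem hp, hcard]; omega
    exact h1'.trans (ih _ _ hsub hBS hc)

lemma rank_mono {S : Finset α} {r : Finset α → ℤ}
    (h1 : ∀ A ⊆ S, ∀ p ∈ S, r A ≤ r (A ∪ {p}))
    {A B : Finset α} (hAB : A ⊆ B) (hBS : B ⊆ S) : r A ≤ r B :=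
  rank_mono_aux h1 _ A B hAB hBS rfl

lemma rank_le_card_aux {S : Finset α} {r : Finset α → ℤ}
    (h0 : r ∅ = 0)
    (h1 : ∀ A ⊆ S, ∀ p ∈ S, r (A ∪ {p}) ≤ r A + 1) :
    ∀ n (A : Finset α), A ⊆ S → A.card = n → r A ≤ A.card := by
  intro n
  induction n with
  | zero =>
    intro A _ hc
    rw [Finset.card_eq_zero.mp hc, h0]
    simp
  | succ n ih =>
    intro A hAS hc
    have hne : A.Nonempty := by rw [← Finset.card_pos, hc]; omega
    obtain ⟨p, hp⟩ := hne
    have herase : A.erase p ∪ {p} = A := by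
      rw [unionSingleton', Finset.insert_erase hp]
    have h1' := h1 (A.erase p) ((Finset.erase_subset _ _).trans hAS) p (hAS hp)
    rw [herase] at h1'
    have hec : (A.erase p).card = n := by
      rw [Finset.card_erase_of_mem hp, hc]; omega
    have hle := ih (A.erase p) ((Finset.erase_subset _ _).trans hAS) hec
    rw [hec] at hle
    rw [hc]; push_cast; push_cast at hle; linarith

end Aux

/-- `𝒢 ∩ 𝒢* = ℳ`: a rank function and its generalized dual are both greedoid
rank functions if and only if the rank function is a matroid rank function. -/
theorem greedoid_and_dual_greedoid_iff_matroid {α : Type*} [DecidableEq α]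
    (S : Finset α) (r : Finset α → ℤ) :
    (IsGreedoidRank S r ∧ IsGreedoidRank S (dualRank S r)) ↔
      IsMatroidRank S r := by
  constructor
  · rintro ⟨⟨h0, hmono, _hsub, hsemi⟩, ⟨_, hmono', _, _⟩⟩
    refine ⟨h0, ?_, hsemi⟩
    intro A hAS p hpS
    refine ⟨hmono A hAS p hpS, ?_⟩
    by_cases hpA : p ∈ A
    · rw [union_self_of_mem' hpA]; omega
    · have hBS : S \ (A ∪ {p}) ⊆ S := Finset.sdiff_subset
      have hApS : A ∪ {p} ⊆ S := by
        intro x hx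
        rcases Finset.mem_union.mp hx with hx | hx
        · exact hAS hx
        · rw [Finset.mem_singleton.mp hx]; exact hpS
      have hSB : S \ (S \ (A ∪ {p})) = A ∪ {p} := Finset.sdiff_sdiff_eq_self hApS
      have hpB : p ∉ S \ (A ∪ {p}) := by simp
      have hSBp : S \ ((S \ (A ∪ {p})) ∪ {p}) = A := by
        rw [sdiff_union_singleton', hSB, Finset.union_sdiff_right]
        rw [Finset.sdiff_singleton_eq_erase]
        exact Finset.erase_eq_of_notMem hpA
      have hcard := card_union_singleton' hpB
      have := hmono' (S \ (A ∪ {p})) hBS p hpS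
      simp only [dualRank, hSB, hSBp, hcard] at this
      linarith
  · rintro ⟨h0, h1, h2⟩
    have h1l : ∀ A ⊆ S, ∀ p ∈ S, r A ≤ r (A ∪ {p}) :=
      fun A hA p hp => (h1 A hA p hp).1
    have h1u : ∀ A ⊆ S, ∀ p ∈ S, r (A ∪ {p}) ≤ r A + 1 :=
      fun A hA p hp => (h1 A hA p hp).2
    constructor
    · exact ⟨h0, h1l, fun A hA => rank_le_card_aux h0 h1u _ A hA rfl, h2⟩
    · refine ⟨?_, ?_, ?_, ?_⟩
      · simp [dualRank]
      · -- monotonicity of dual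
        intro A hAS p hpS
        by_cases hpA : p ∈ A
        · rw [union_self_of_mem' hpA]
        · have hpSA : p ∈ S \ A := Finset.mem_sdiff.mpr ⟨hpS, hpA⟩
          have hE : (S \ A) \ {p} ∪ {p} = S \ A := sdiff_singleton_union_self' hpSA
          have hkey := h1u ((S \ A) \ {p})
            ((Finset.sdiff_subset).trans Finset.sdiff_subset) p hpS
          rw [hE] at hkey
          simp only [dualRank, sdiff_union_singleton', card_union_singleton' hpA]
          linarith
      · -- subcardinality of dual
        intro A hAS
        have := rank_mono h1l (Finset.sdiff_subset (s := S) (t := A))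
          (Finset.Subset.refl S)
        simp only [dualRank]
        linarith
      · -- local semimodularity of dual
        intro A hAS p hpS q hqS hp hq
        by_cases hpA : p ∈ A
        · have e2 : A ∪ {p, q} = A ∪ {q} := by
            rw [union_pair', union_self_of_mem' hpA]
          rw [e2]; exact hq.symm
        by_cases hqA : q ∈ A
        · have e2 : A ∪ {p, q} = A ∪ {p} := by
            rw [union_pair', union_self_of_mem' (Finset.mem_union_left _ hqA)]
          rw [e2]; exact hp.symm
        by_cases hpq : p = q
        · have e2 : A ∪ {p, q} = A ∪ {p} := by
            subst hpq
            rw [union_pair', union_self_of_mem' (by simp : p ∈ A ∪ {p})]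
          rw [e2]; exact hp.symm
        -- main case: p, q ∉ A, p ≠ q
        have hpB : p ∈ S \ A := Finset.mem_sdiff.mpr ⟨hpS, hpA⟩
        have hqB : q ∈ S \ A := Finset.mem_sdiff.mpr ⟨hqS, hqA⟩
        have hcardp := card_union_singleton' hpA
        have hcardq := card_union_singleton' hqA
        have hqAp : q ∉ A ∪ {p} := by
          simp only [Finset.mem_union, Finset.mem_singleton]
          rintro (h | h)
          · exact hqA h
          · exact hpq h.symm
        have hcardpq : ((A ∪ {p, q}).card : ℤ) = A.card + 2 := by
          rw [union_pair', card_union_singleton' hqAp, hcardp]; ring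
        have hsp : S \ (A ∪ {p}) = (S \ A) \ {p} := sdiff_union_singleton' S A p
        have hsq : S \ (A ∪ {q}) = (S \ A) \ {q} := sdiff_union_singleton' S A q
        have hspq : S \ (A ∪ {p, q}) = ((S \ A) \ {p}) \ {q} := by
          rw [union_pair', sdiff_union_singleton', sdiff_union_singleton']
        simp only [dualRank, hsp, hcardp] at hp
        simp only [dualRank, hsq, hcardq] at hq
        have hrp : r (S \ A) = r ((S \ A) \ {p}) + 1 := by linarith
        have hrq : r (S \ A) = r ((S \ A) \ {q}) + 1 := by linarith
        have hqBp : q ∈ (S \ A) \ {p} := by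
          rw [Finset.mem_sdiff, Finset.mem_singleton]
          exact ⟨hqB, fun h => hpq h.symm⟩
        have hpBq : p ∈ (S \ A) \ {q} := by
          rw [Finset.mem_sdiff, Finset.mem_singleton]
          exact ⟨hpB, hpq⟩
        have hCS : ((S \ A) \ {p}) \ {q} ⊆ S :=
          (Finset.sdiff_subset.trans Finset.sdiff_subset).trans Finset.sdiff_subset
        have hCq : (((S \ A) \ {p}) \ {q}) ∪ {q} = (S \ A) \ {p} :=
          sdiff_singleton_union_self' hqBp
        have hCp : (((S \ A) \ {p}) \ {q}) ∪ {p} = (S \ A) \ {q} := by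
          rw [sdiff_sdiff_comm']
          exact sdiff_singleton_union_self' hpBq
        have hCpq : (((S \ A) \ {p}) \ {q}) ∪ {p, q} = S \ A := by
          rw [union_pair', hCp, sdiff_singleton_union_self' hqB]
        have hle1 : r (((S \ A) \ {p}) \ {q}) ≤ r ((((S \ A) \ {p}) \ {q}) ∪ {q}) :=
          h1l _ hCS q hqS
        have hle2 : r ((((S \ A) \ {p}) \ {q}) ∪ {q}) ≤ r (((S \ A) \ {p}) \ {q}) + 1 :=
          h1u _ hCS q hqS
        rw [hCq] at hle1 hle2
        have hrC : r (((S \ A) \ {p}) \ {q}) = r (S \ A) - 2 := by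
          by_contra hne
          have hCval : r (((S \ A) \ {p}) \ {q}) = r (S \ A) - 1 := by
            rcases eq_or_lt_of_le (show r (S \ A) - 2 ≤ r (((S \ A) \ {p}) \ {q}) from by
              linarith) with h | h
            · exact absurd h.symm hne
            · linarith
          have heqp : r (((S \ A) \ {p}) \ {q}) = r ((((S \ A) \ {p}) \ {q}) ∪ {p}) := by
            rw [hCp]; linarith
          have heqq : r (((S \ A) \ {p}) \ {q}) = r ((((S \ A) \ {p}) \ {q}) ∪ {q}) := by
            rw [hCq]; linarith
          have := h2 _ hCS p hpS q hqS heqp heqq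
          rw [hCpq] at this
          linarith
        simp only [dualRank, hspq, hcardpq]
        linarith
end

section
/- Let r : 2^S → ℤ be a greedoid rank function on a finite set S and suppose p ∈ S belongs to some feasible set F (i.e., some F with p ∈ F and r(F) = |F|). Define the contraction rank function r'' on subsets of S − p by r''(A) = r(A ∪ {p}) − r({p}). Then r'' is a greedoid rank function on S − p if and only if {p} is feasible, i.e., r({p}) = 1. -/
/-- If `p` lies in some feasible set of a greedoid, then the contraction `G/p`,
with rank function `r''(A) = r(A ∪ {p}) - r({p})` on ground set `S - p`, is a
greedoid if and only if `{p}` is feasible, i.e. `r({p}) = 1`. -/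
theorem contraction_greedoid_iff_feasible {α : Type*} [DecidableEq α]
    (S : Finset α) (r : Finset α → ℤ) (hr : IsGreedoidRank S r)
    (p : α) (hp : p ∈ S) (hfeas : ∃ F ⊆ S, p ∈ F ∧ r F = F.card) :
    IsGreedoidRank (S \ {p}) (fun A => r (A ∪ {p}) - r {p}) ↔ r {p} = 1 := by
  obtain ⟨hr0, hr1, hr2, hr3⟩ := hr
  constructor
  · rintro ⟨-, -, h2, -⟩
    obtain ⟨F, hFS, hpF, hrF⟩ := hfeas
    have hA : F.erase p ⊆ S \ {p} := by
      intro x hx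
      simp only [Finset.mem_erase] at hx
      simp [hx.1, hFS hx.2]
    have h := h2 (F.erase p) hA
    have hup : F.erase p ∪ {p} = F := by
      ext x
      simp only [Finset.mem_union, Finset.mem_erase, Finset.mem_singleton]
      constructor
      · rintro (⟨-, h⟩ | rfl) <;> [exact h; exact hpF]
      · intro hx
        by_cases hxp : x = p
        · exact Or.inr hxp
        · exact Or.inl ⟨hxp, hx⟩
    have hcard : (F.erase p).card = F.card - 1 := Finset.card_erase_of_mem hpF
    have hFpos : 1 ≤ F.card := Finset.card_pos.mpr ⟨p, hpF⟩
    have hle : r {p} ≤ 1 := by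
      have := hr2 {p} (by simpa using hp)
      simpa using this
    have hge : 1 ≤ r {p} := by
      simp only [hup, hrF, hcard] at h
      have : ((F.card - 1 : ℕ) : ℤ) = (F.card : ℤ) - 1 := by
        push_cast [hFpos]; ring
      omega
    omega
  · intro hp1
    refine ⟨by simp [hp1], ?_, ?_, ?_⟩
    · intro A hA q hq
      have hAS : A ∪ {p} ⊆ S := by
        intro x hx
        rcases Finset.mem_union.mp hx with h | h
        · exact (Finset.mem_sdiff.mp (hA h)).1
        · simp only [Finset.mem_singleton] at h; exact h ▸ hp
      have hqS : q ∈ S := (Finset.mem_sdiff.mp hq).1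
      have := hr1 (A ∪ {p}) hAS q hqS
      have heq : A ∪ {q} ∪ {p} = A ∪ {p} ∪ {q} := by
        ext x; simp only [Finset.mem_union]; tauto
      simp only [heq]
      omega
    · intro A hA
      have hpA : p ∉ A := fun h => (Finset.mem_sdiff.mp (hA h)).2 (by simp)
      have hAS : A ∪ {p} ⊆ S := by
        intro x hx
        rcases Finset.mem_union.mp hx with h | h
        · exact (Finset.mem_sdiff.mp (hA h)).1
        · simp only [Finset.mem_singleton] at h; exact h ▸ hp
      have h := hr2 (A ∪ {p}) hAS
      have hcard : (A ∪ {p}).card = A.card + 1 := by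
        rw [Finset.union_comm, ← Finset.insert_eq, Finset.card_insert_of_notMem hpA]
      rw [hcard] at h
      push_cast at h ⊢
      omega
    · intro A hA q hq q' hq' h1 h2
      have hAS : A ∪ {p} ⊆ S := by
        intro x hx
        rcases Finset.mem_union.mp hx with h | h
        · exact (Finset.mem_sdiff.mp (hA h)).1
        · simp only [Finset.mem_singleton] at h; exact h ▸ hp
      have hqS : q ∈ S := (Finset.mem_sdiff.mp hq).1
      have hq'S : q' ∈ S := (Finset.mem_sdiff.mp hq').1
      have e1 : A ∪ {q} ∪ {p} = A ∪ {p} ∪ {q} := by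
        ext x; simp only [Finset.mem_union]; tauto
      have e2 : A ∪ {q'} ∪ {p} = A ∪ {p} ∪ {q'} := by
        ext x; simp only [Finset.mem_union]; tauto
      have e3 : A ∪ {q, q'} ∪ {p} = A ∪ {p} ∪ {q, q'} := by
        ext x; simp only [Finset.mem_union]; tauto
      simp only [e1] at h1
      simp only [e2] at h2
      have := hr3 (A ∪ {p}) hAS q hqS q' hq'S (by omega) (by omega)
      simp only [e3]
      omega
end

section
/- Let r : 2^S → ℤ be a greedoid rank function on a finite set S whose family of feasible sets is closed under union (an antimatroid), and which is full, i.e., r(S) = |S|. For A ⊆ S, let the convex closure Ā be the intersection of all convex sets containing A (a set C is convex if S − C is feasible). Then r*(A) = −|Ā − A| for every A ⊆ S, where r*(A) = |A| + r(S − A) − r(S). -/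
/-- The convex closure of `A`: the intersection of all convex sets containing
`A`, where `C ⊆ S` is convex when its complement `S - C` is feasible
(`r(S - C) = |S - C|`). -/
noncomputable def convexClosure {α : Type*} [DecidableEq α] (S : Finset α)
    (r : Finset α → ℤ) (A : Finset α) : Finset α :=
  open Classical in
  S.filter (fun x => ∀ C ⊆ S, r (S \ C) = ((S \ C).card : ℤ) → A ⊆ C → x ∈ C)

theorem gr_mono {α : Type*} [DecidableEq α] {S : Finset α} {r : Finset α → ℤ}
    (hr : IsGreedoidRank S r) :
    ∀ n (A B : Finset α), B ⊆ S → A ⊆ B → (B \ A).card = n → r A ≤ r B := by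
  intro n
  induction n with
  | zero =>
    intro A B hB hAB hc
    have : B ⊆ A := by
      intro x hx
      by_contra hxA
      have : x ∈ B \ A := Finset.mem_sdiff.mpr ⟨hx, hxA⟩
      simp [Finset.card_eq_zero.mp hc] at this
    rw [Finset.Subset.antisymm hAB this]
  | succ n ih =>
    intro A B hB hAB hc
    have hne : (B \ A).Nonempty := by
      rw [← Finset.card_pos, hc]; omega
    obtain ⟨p, hp⟩ := hne
    have hpB : p ∈ B := (Finset.mem_sdiff.mp hp).1
    have hpA : p ∉ A := (Finset.mem_sdiff.mp hp).2
    have h1 : r A ≤ r (A ∪ {p}) := hr.2.1 A (hAB.trans hB) p (hB hpB)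
    have h2 : r (A ∪ {p}) ≤ r B := by
      apply ih (A ∪ {p}) B hB
      · intro x hx
        rcases Finset.mem_union.mp hx with h | h
        · exact hAB h
        · simpa [Finset.mem_singleton.mp h] using hpB
      · have : B \ (A ∪ {p}) = (B \ A).erase p := by
          ext x; simp [Finset.mem_sdiff, and_comm]; tauto
        rw [this, Finset.card_erase_of_mem hp, hc]
        omega
    exact h1.trans h2

theorem gr_absorb {α : Type*} [DecidableEq α] {S : Finset α} {r : Finset α → ℤ}
    (hr : IsGreedoidRank S r) (F B : Finset α) (hB : B ⊆ S) (hFB : F ⊆ B)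
    (hstep : ∀ p ∈ B, r (F ∪ {p}) = r F) : r B = r F := by
  have key : ∀ X : Finset α, X ⊆ B →
      (r (F ∪ X) = r F ∧ ∀ p ∈ B, r ((F ∪ X) ∪ {p}) = r F) := by
    intro X
    induction X using Finset.induction_on with
    | empty =>
      intro _
      exact ⟨by simp, fun p hp => by rw [Finset.union_empty]; exact hstep p hp⟩
    | @insert a X ha ih =>
      intro hsub
      have haB : a ∈ B := hsub (Finset.mem_insert_self a X)
      have hXB : X ⊆ B := fun x hx => hsub (Finset.mem_insert_of_mem hx)
      obtain ⟨ih1, ih2⟩ := ih hXB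
      have heq : F ∪ insert a X = (F ∪ X) ∪ {a} := by
        ext x; simp only [Finset.mem_union, Finset.mem_insert, Finset.mem_singleton]; tauto
      have hFXS : F ∪ X ⊆ S := Finset.union_subset (hFB.trans hB) (hXB.trans hB)
      constructor
      · rw [heq]; exact ih2 a haB
      · intro p hp
        have heq2 : (F ∪ insert a X) ∪ {p} = (F ∪ X) ∪ {a, p} := by
          ext x; simp only [Finset.mem_union, Finset.mem_insert, Finset.mem_singleton]; tauto
        rw [heq2]
        have := hr.2.2.2 (F ∪ X) hFXS a (hB haB) p (hB hp)
          (ih1.trans (ih2 a haB).symm) (ih1.trans (ih2 p hp).symm)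
        rw [this, ih1]
  have := (key (B \ F) Finset.sdiff_subset).1
  rwa [Finset.union_sdiff_of_subset hFB] at this

/-- In a full antimatroid, the dual rank of `A` equals minus the number of
elements added to `A` by convex closure: `r*(A) = -|Ā - A|`. -/
theorem antimatroid_dual_rank {α : Type*} [DecidableEq α] (S : Finset α)
    (r : Finset α → ℤ) (hr : IsGreedoidRank S r)
    (hunion : ∀ F₁ ⊆ S, ∀ F₂ ⊆ S, r F₁ = F₁.card → r F₂ = F₂.card →
      r (F₁ ∪ F₂) = ((F₁ ∪ F₂).card : ℤ))
    (hfull : r S = S.card) :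
    ∀ A ⊆ S, dualRank S r A = -(((convexClosure S r A) \ A).card : ℤ) := by
  classical
  intro A hA
  set F₀ : Finset α := ((S \ A).powerset.filter fun F => r F = F.card).sup id with hF₀def
  -- F₀ is a feasible subset of S \ A
  have hF₀ : F₀ ⊆ S \ A ∧ r F₀ = F₀.card := by
    rw [hF₀def]
    apply Finset.sup_induction (p := fun F => F ⊆ S \ A ∧ r F = F.card)
    · exact ⟨Finset.empty_subset _, by simp [hr.1]⟩
    · rintro F₁ ⟨h1, hf1⟩ F₂ ⟨h2, hf2⟩
      rw [Finset.sup_eq_union]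
      refine ⟨Finset.union_subset h1 h2, ?_⟩
      exact hunion F₁ (h1.trans Finset.sdiff_subset) F₂ (h2.trans Finset.sdiff_subset) hf1 hf2
    · intro F hF
      simp only [Finset.mem_filter, Finset.mem_powerset] at hF
      exact ⟨hF.1, hF.2⟩
  obtain ⟨hF₀sub, hF₀feas⟩ := hF₀
  have hF₀S : F₀ ⊆ S := hF₀sub.trans Finset.sdiff_subset
  -- maximality
  have hmax : ∀ F ⊆ S \ A, r F = F.card → F ⊆ F₀ := by
    intro F hFs hFf
    exact Finset.le_sup (f := id) (Finset.mem_filter.mpr ⟨Finset.mem_powerset.mpr hFs, hFf⟩)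
  -- absorption step
  have hstep : ∀ p ∈ S \ A, r (F₀ ∪ {p}) = r F₀ := by
    intro p hp
    by_cases hpF : p ∈ F₀
    · congr 1
      ext x; simp only [Finset.mem_union, Finset.mem_singleton]
      constructor
      · rintro (h | rfl) <;> [exact h; exact hpF]
      · exact Or.inl
    · have hc : ((F₀ ∪ {p}).card : ℤ) = (F₀.card : ℤ) + 1 := by
        rw [Finset.union_comm, ← Finset.insert_eq, Finset.card_insert_of_notMem hpF]
        push_cast; ring
      have h1 : r F₀ ≤ r (F₀ ∪ {p}) := hr.2.1 F₀ hF₀S p (Finset.sdiff_subset hp)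
      have h2 : r (F₀ ∪ {p}) ≤ (F₀ ∪ {p}).card :=
        hr.2.2.1 _ (Finset.union_subset hF₀S (by simpa using Finset.sdiff_subset hp))
      by_cases hfe : r (F₀ ∪ {p}) = ((F₀ ∪ {p}).card : ℤ)
      · exfalso
        have hsub : F₀ ∪ {p} ⊆ S \ A :=
          Finset.union_subset hF₀sub (by simpa using hp)
        exact hpF (hmax _ hsub hfe (Finset.mem_union_right _ (Finset.mem_singleton_self p)))
      · rw [hF₀feas] at h1 ⊢
        omega
  have hrank : r (S \ A) = (F₀.card : ℤ) := by
    rw [gr_absorb hr F₀ (S \ A) Finset.sdiff_subset hF₀sub hstep, hF₀feas]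
  -- closure = S \ F₀
  have hclos : convexClosure S r A = S \ F₀ := by
    ext x
    simp only [convexClosure, Finset.mem_filter, Finset.mem_sdiff]
    constructor
    · rintro ⟨hxS, hx⟩
      refine ⟨hxS, fun hxF => ?_⟩
      have hback : S \ (S \ F₀) = F₀ := Finset.sdiff_sdiff_eq_self hF₀S
      have hAC : A ⊆ S \ F₀ := by
        intro a ha
        refine Finset.mem_sdiff.mpr ⟨hA ha, fun haF => ?_⟩
        exact (Finset.mem_sdiff.mp (hF₀sub haF)).2 ha
      have := hx (S \ F₀) Finset.sdiff_subset (by rw [hback]; exact hF₀feas) hAC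
      exact (Finset.mem_sdiff.mp this).2 hxF
    · rintro ⟨hxS, hxF⟩
      refine ⟨hxS, fun C hC hCf hAC => ?_⟩
      have hsub : S \ C ⊆ S \ A := Finset.sdiff_subset_sdiff (le_refl S) hAC
      have := hmax (S \ C) hsub hCf
      by_contra hxC
      exact hxF (this (Finset.mem_sdiff.mpr ⟨hxS, hxC⟩))
  rw [hclos]
  have hAsub : A ⊆ S \ F₀ := by
    intro a ha
    refine Finset.mem_sdiff.mpr ⟨hA ha, fun haF => ?_⟩
    exact (Finset.mem_sdiff.mp (hF₀sub haF)).2 ha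
  have c1 : ((S \ F₀) \ A).card + A.card = (S \ F₀).card :=
    Finset.card_sdiff_add_card_eq_card hAsub
  have c2 : (S \ F₀).card + F₀.card = S.card :=
    Finset.card_sdiff_add_card_eq_card hF₀S
  simp only [dualRank, hrank, hfull]
  push_cast [← c1, ← c2]
  ring
end

section
/- Let S be a finite set and r : 2^S → ℤ a function, with dual rank r*(A) = |A| + r(S − A) − r(S). Then the triple (S, r, r*) is a demi-matroid if and only if r satisfies, for all p ∈ S and A, B ⊆ S: (a) 0 ≤ r(A) ≤ |A|; (b) if A ⊆ B then r(A) ≤ r(B); and (c) r(A ∪ {p}) ≤ r(A) + 1. -/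
/-- A demi-matroid: both rank functions are nonnegative, subcardinal and
monotone, and they satisfy the duality identity
`|S - A| - r(S - A) = s(S) - s(A)`. -/
def IsDemiMatroid {α : Type*} [DecidableEq α] (S : Finset α)
    (r s : Finset α → ℤ) : Prop :=
  (∀ A ⊆ S, 0 ≤ r A ∧ r A ≤ A.card) ∧
  (∀ A ⊆ S, 0 ≤ s A ∧ s A ≤ A.card) ∧
  (∀ A B : Finset α, A ⊆ B → B ⊆ S → r A ≤ r B ∧ s A ≤ s B) ∧
  (∀ A ⊆ S, ((S \ A).card : ℤ) - r (S \ A) = s S - s A)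

/-!
Write `r*` for `dualRank S r`. For `A ⊆ B ⊆ S`, the inequality `r*(A) ≤ r*(B)` says exactly
`r(S - A) ≤ r(S - B) + |B - A|`, and `S - A` is `S - B` enlarged by the `|B - A|` elements of
`B - A`. So `r*` is monotone precisely when adding `k` elements to a set raises its rank by at
most `k`, which is the case `k = 1` iterated. Nonnegativity and subcardinality of `r*` reduce to
monotonicity of `r*` and `r`, and the duality identity for `(r, r*)` holds iff `r(∅) = 0`.
-/

open Finset

namespace DemiMatroid

variable {α : Type*} [DecidableEq α] {S : Finset α} {r : Finset α → ℤ}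

theorem rank_union_le_add_card (hstep : ∀ A ⊆ S, ∀ p ∈ S, r (A ∪ {p}) ≤ r A + 1)
    {X Y : Finset α} (hX : X ⊆ S) (hY : Y ⊆ S) : r (X ∪ Y) ≤ r X + #Y := by
  induction Y using Finset.induction_on with
  | empty => simp
  | insert a Y ha ih =>
    obtain ⟨haS, hYS⟩ := insert_subset_iff.1 hY
    have hle := hstep (X ∪ Y) (union_subset hX hYS) a haS
    rw [union_insert, ← union_singleton, card_insert_of_notMem ha]
    push_cast
    linarith [ih hYS]

variable (S r)

@[simp]
theorem dualRank_empty : dualRank S r ∅ = 0 := by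
  simp [dualRank]

theorem dualRank_self_sub_dualRank {A : Finset α} (hA : A ⊆ S) :
    dualRank S r S - dualRank S r A = #(S \ A) - r (S \ A) + r ∅ := by
  have hcard := card_sdiff_add_card_eq_card hA
  unfold dualRank
  rw [Finset.sdiff_self]
  push_cast [← hcard]
  ring

theorem dualRank_le_dualRank_iff {A B : Finset α} (hAB : A ⊆ B) :
    dualRank S r A ≤ dualRank S r B ↔ r (S \ A) ≤ r (S \ B) + #(B \ A) := by
  have hcard := card_sdiff_add_card_eq_card hAB
  unfold dualRank
  constructor <;> intro h <;> push_cast [← hcard] at h ⊢ <;> linarith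

variable {S r}

theorem rank_insert_le_of_dualRank_mono
    (hmono : ∀ A B : Finset α, A ⊆ B → B ⊆ S → dualRank S r A ≤ dualRank S r B)
    {A : Finset α} (hA : A ⊆ S) {p : α} (hp : p ∈ S) : r (A ∪ {p}) ≤ r A + 1 := by
  have hAp : A ∪ {p} ⊆ S := union_subset hA (singleton_subset_iff.2 hp)
  have hsub : S \ (A ∪ {p}) ⊆ S \ A := sdiff_subset_sdiff le_rfl subset_union_left
  have hle := (dualRank_le_dualRank_iff S r hsub).1 (hmono _ _ hsub sdiff_subset)
  rw [Finset.sdiff_sdiff_eq_self hAp, Finset.sdiff_sdiff_eq_self hA] at hle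
  have hcard : #((S \ A) \ (S \ (A ∪ {p}))) ≤ #{p} := card_le_card fun x hx => by
    simp only [mem_sdiff, mem_union, mem_singleton] at hx ⊢
    tauto
  rw [card_singleton] at hcard
  linarith [(Nat.cast_le (α := ℤ)).2 hcard]

theorem dualRank_mono_of_rank_insert_le
    (hstep : ∀ A ⊆ S, ∀ p ∈ S, r (A ∪ {p}) ≤ r A + 1)
    {A B : Finset α} (hAB : A ⊆ B) (hBS : B ⊆ S) : dualRank S r A ≤ dualRank S r B := by
  rw [dualRank_le_dualRank_iff S r hAB, ← sdiff_union_sdiff_cancel hBS hAB]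
  exact rank_union_le_add_card hstep sdiff_subset (sdiff_subset.trans hBS)

end DemiMatroid

open DemiMatroid in
/-- `(S, r, r*)` is a demi-matroid if and only if `r` is nonnegative and
subcardinal, monotone, and has unit rank increase. -/
theorem demiMatroid_iff {α : Type*} [DecidableEq α] (S : Finset α)
    (r : Finset α → ℤ) :
    IsDemiMatroid S r (dualRank S r) ↔
      ((∀ A ⊆ S, 0 ≤ r A ∧ r A ≤ A.card) ∧
       (∀ A B : Finset α, A ⊆ B → B ⊆ S → r A ≤ r B) ∧
       (∀ A ⊆ S, ∀ p ∈ S, r (A ∪ {p}) ≤ r A + 1)) := by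
  constructor
  · rintro ⟨hr, -, hmono, -⟩
    refine ⟨hr, fun A B hAB hBS => (hmono A B hAB hBS).1, fun A hA p hp => ?_⟩
    exact rank_insert_le_of_dualRank_mono (fun A B hAB hBS => (hmono A B hAB hBS).2) hA hp
  · rintro ⟨hr, hmono, hstep⟩
    have hdual {A B : Finset α} (hAB : A ⊆ B) (hBS : B ⊆ S) :
        dualRank S r A ≤ dualRank S r B :=
      dualRank_mono_of_rank_insert_le hstep hAB hBS
    have hr_empty : r ∅ = 0 := by
      obtain ⟨h0, h1⟩ := hr ∅ (empty_subset S)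
      exact le_antisymm (by simpa using h1) h0
    refine ⟨hr, fun A hA => ⟨?_, ?_⟩,
      fun A B hAB hBS => ⟨hmono A B hAB hBS, hdual hAB hBS⟩, fun A hA => ?_⟩
    · simpa using hdual (empty_subset A) hA
    · have := hmono (S \ A) S sdiff_subset subset_rfl
      unfold dualRank
      linarith
    · rw [dualRank_self_sub_dualRank S r hA, hr_empty, add_zero]
end
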